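/- arXiv:math/0311238 — 2 statements merged into one kernel-verified Lean document; each statement's English description precedes it below -/
import Mathlib

section
/- Let a ∈ ℂ and 0 < r₁ < r₂. Then Ω(A(a,r₁,r₂)) is an open, connected, unbounded subset of ℂ² \ Σ, and the intersection of the closure of Ω(A(a,r₁,r₂)) with Σ equals {(z, conj(z)) : z ∈ A(a,r₁,r₂)}. -/
open Complex Metric ComplexConjugate

/-- The variety `Λ_{a,ρ} = {(z,w) : (z−a)(w−conj a) = ρ², 0 < |z−a| < ρ}`. -/
def Lam (a : ℂ) (ρ : ℝ) : Set (ℂ × ℂ) :=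
  {p | (p.1 - a) * (p.2 - conj a) = (ρ : ℂ) ^ 2 ∧
        0 < ‖p.1 - a‖ ∧ ‖p.1 - a‖ < ρ}

/-- The closed annulus `A(a,r₁,r₂) = {z : r₁ ≤ |z−a| ≤ r₂}`. -/
def Ann (a : ℂ) (r₁ r₂ : ℝ) : Set ℂ :=
  {z | r₁ ≤ ‖z - a‖ ∧ ‖z - a‖ ≤ r₂}

/-- `Ω(A(a,r₁,r₂))`: the union of all `Λ_{b,ρ}` with `bΔ(b,ρ) ⊆ Int A(a,r₁,r₂)`
surrounding `a`. -/
def OmegaA (a : ℂ) (r₁ r₂ : ℝ) : Set (ℂ × ℂ) :=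
  {p | ∃ (b : ℂ) (ρ : ℝ), 0 < ρ ∧ sphere b ρ ⊆ interior (Ann a r₁ r₂) ∧
        ‖b - a‖ < ρ ∧ p ∈ Lam b ρ}

/-- The totally real plane `Σ = {(z, conj z) : z ∈ ℂ}`. -/
def Sig : Set (ℂ × ℂ) := {p | p.2 = conj p.1}

/-!
`Ω(A(a,r₁,r₂))` is the union of the leaves `Λ_{b,ρ}` over the open convex set of admissible
`(b, ρ)`. Writing the points of a leaf as `(b + ρ e^ζ, conj b + ρ e^{-ζ})` with `Re ζ < 0` makes
`Ω` a continuous image of a convex set, hence connected; letting `e^ζ → 0` shows it is unbounded,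
and letting `Re ζ → 0` along circles centred at `a` reaches every `(z, conj z)` with `z` in the
annulus. A point `p` of `Λ_{b,ρ}` satisfies `|p.1 - b| < ρ < |conj p.2 - b|`, which keeps `Ω`
off `Σ` and confines the limit points on `Σ` to the closed annulus. Openness comes from the
converse direction: `p` together with the ratio `s = |p.1 - b| / ρ ∈ (0,1)` determines `(b, ρ)`
continuously, so `Ω` is a union over `s` of preimages of the open set of admissible `(b, ρ)`.
-/

open Set Filter Topology Bornology

lemma interior_Ann (a : ℂ) {r₁ : ℝ} (r₂ : ℝ) (hr₁ : r₁ ≠ 0) :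
    interior (Ann a r₁ r₂) = ball a r₂ \ closedBall a r₁ := by
  have : Ann a r₁ r₂ = closedBall a r₂ \ ball a r₁ := by
    ext z; simp [Ann, dist_eq, and_comm]
  rw [this, sdiff_eq, interior_inter, interior_compl, interior_closedBall', closure_ball a hr₁,
    ← sdiff_eq]

lemma sphere_subset_ball_diff_closedBall_iff {a b : ℂ} {ρ r₁ r₂ : ℝ} (hba : dist b a ≤ ρ) :
    sphere b ρ ⊆ ball a r₂ \ closedBall a r₁ ↔ r₁ + dist b a < ρ ∧ ρ + dist b a < r₂ := by
  constructor
  · intro h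
    set u := exp (arg (b - a) * I)
    have hu : b - a = dist b a * u := by rw [dist_eq, norm_mul_exp_arg_mul_I]
    have hu1 : ‖u‖ = 1 := norm_exp_ofReal_mul_I _
    have hsphere : ∀ t : ℝ, |t| = ρ → b + t * u ∈ sphere b ρ := fun t ht ↦ by
      simp [hu1, ht]
    have hρ : 0 ≤ ρ := dist_nonneg.trans hba
    obtain ⟨-, hin⟩ := h (hsphere (-ρ) (by simp [hρ]))
    obtain ⟨hout, -⟩ := h (hsphere ρ (abs_of_nonneg hρ))
    rw [mem_closedBall, not_le, dist_eq, show b + (-ρ : ℝ) * u - a = (dist b a - ρ : ℝ) * u by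
      push_cast; linear_combination hu, norm_mul, hu1, mul_one, norm_real, Real.norm_eq_abs,
      abs_of_nonpos (by linarith)] at hin
    rw [mem_ball, dist_eq, show b + (ρ : ℝ) * u - a = (ρ + dist b a : ℝ) * u by
      push_cast; linear_combination hu, norm_mul, hu1, mul_one, norm_real, Real.norm_eq_abs,
      abs_of_nonneg (by positivity)] at hout
    constructor <;> linarith
  · rintro ⟨hin, hout⟩ z hz
    rw [mem_sphere] at hz
    refine ⟨?_, ?_⟩
    · rw [mem_ball]; linarith [dist_triangle z b a]
    · rw [mem_closedBall, not_le]; linarith [dist_triangle z a b, dist_comm a b]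

/-- The pairs `(b, ρ)` such that `bΔ(b,ρ)` lies in the interior of `A(a,r₁,r₂)` and surrounds
`a`. -/
def circlesAround (a : ℂ) (r₁ r₂ : ℝ) : Set (ℂ × ℝ) :=
  {c | r₁ + dist c.1 a < c.2 ∧ c.2 + dist c.1 a < r₂}

lemma dist_lt_of_mem_circlesAround {a : ℂ} {r₁ r₂ : ℝ} (hr₁ : 0 ≤ r₁) {c : ℂ × ℝ}
    (hc : c ∈ circlesAround a r₁ r₂) : dist c.1 a < c.2 := by
  linarith [hc.1]

lemma pos_of_mem_circlesAround {a : ℂ} {r₁ r₂ : ℝ} (hr₁ : 0 ≤ r₁) {c : ℂ × ℝ}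
    (hc : c ∈ circlesAround a r₁ r₂) : 0 < c.2 :=
  dist_nonneg.trans_lt (dist_lt_of_mem_circlesAround hr₁ hc)

lemma OmegaA_eq_biUnion (a : ℂ) {r₁ : ℝ} (r₂ : ℝ) (h1 : 0 < r₁) :
    OmegaA a r₁ r₂ = ⋃ c ∈ circlesAround a r₁ r₂, Lam c.1 c.2 := by
  ext p
  simp only [OmegaA, mem_iUnion, interior_Ann a r₂ h1.ne', exists_prop, Prod.exists]
  constructor
  · rintro ⟨b, ρ, -, hsub, hba, hp⟩
    rw [← dist_eq] at hba
    exact ⟨b, ρ, (sphere_subset_ball_diff_closedBall_iff hba.le).1 hsub, hp⟩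
  · rintro ⟨b, ρ, hc, hp⟩
    have hba := dist_lt_of_mem_circlesAround h1.le hc
    exact ⟨b, ρ, dist_nonneg.trans_lt hba, (sphere_subset_ball_diff_closedBall_iff hba.le).2 hc,
      by rwa [← dist_eq], hp⟩

lemma isOpen_circlesAround (a : ℂ) (r₁ r₂ : ℝ) : IsOpen (circlesAround a r₁ r₂) :=
  (isOpen_lt (by fun_prop) continuous_snd).inter
    (isOpen_lt (by fun_prop) (continuous_const (y := r₂)))

lemma convex_circlesAround (a : ℂ) (r₁ r₂ : ℝ) : Convex ℝ (circlesAround a r₁ r₂) := by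
  have hdist : ConvexOn ℝ univ fun c : ℂ × ℝ ↦ dist c.1 a :=
    (convexOn_dist a convex_univ).comp_linearMap (LinearMap.fst ℝ ℂ ℝ)
  have h₁ := (hdist.sub ((LinearMap.snd ℝ ℂ ℝ).concaveOn convex_univ)).convex_lt (-r₁)
  have h₂ := (hdist.add ((LinearMap.snd ℝ ℂ ℝ).convexOn convex_univ)).convex_lt r₂
  have : circlesAround a r₁ r₂ = {c ∈ univ | dist c.1 a - c.2 < -r₁} ∩
      {c ∈ univ | dist c.1 a + c.2 < r₂} := by
    ext c
    simp only [circlesAround, mem_inter_iff, mem_ofPred_eq, mem_univ, true_and]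
    constructor <;> rintro ⟨h, h'⟩ <;> constructor <;> linarith
  rw [this]
  exact h₁.inter h₂

/-- As `ζ` ranges over the left half-plane, `u = exp ζ` ranges over the punctured unit disc, and
`Λ_{b,ρ} = {(b + ρu, conj b + ρ/u)}`. The half-plane is used rather than the disc for convexity. -/
noncomputable def lamParam (b : ℂ) (ρ : ℝ) (ζ : ℂ) : ℂ × ℂ :=
  (b + ρ * exp ζ, conj b + ρ * exp (-ζ))

lemma continuous_lamParam : Continuous fun x : (ℂ × ℝ) × ℂ ↦ lamParam x.1.1 x.1.2 x.2 := by
  unfold lamParam; fun_prop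

lemma Lam_eq_image {b : ℂ} {ρ : ℝ} (hρ : 0 < ρ) :
    Lam b ρ = lamParam b ρ '' {ζ | ζ.re < 0} := by
  ext p
  constructor
  · rintro ⟨hprod, hpos, hlt⟩
    have hv : p.1 - b ≠ 0 := norm_pos_iff.1 hpos
    have hρ' : (ρ : ℂ) ≠ 0 := ofReal_ne_zero.2 hρ.ne'
    refine ⟨log ((p.1 - b) / ρ), ?_, ?_⟩
    · rw [mem_ofPred_eq, log_re, norm_div, norm_real, Real.norm_of_nonneg hρ.le]
      exact Real.log_neg (by positivity) ((div_lt_one hρ).2 hlt)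
    · rw [lamParam, exp_neg, exp_log (div_ne_zero hv hρ')]
      ext1
      · field_simp; ring
      · field_simp
        linear_combination -hprod
  · rintro ⟨ζ, hζ, rfl⟩
    have hnorm : ‖b + ρ * exp ζ - b‖ = ρ * Real.exp ζ.re := by
      rw [add_sub_cancel_left, norm_mul, norm_exp, norm_real, Real.norm_of_nonneg hρ.le]
    show _ = _ ∧ 0 < ‖b + ρ * exp ζ - b‖ ∧ ‖b + ρ * exp ζ - b‖ < ρ
    refine ⟨?_, ?_, ?_⟩
    · calc (b + ρ * exp ζ - b) * (conj b + ρ * exp (-ζ) - conj b)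
          = ρ ^ 2 * exp (ζ + -ζ) := by rw [exp_add]; ring
        _ = ρ ^ 2 := by rw [add_neg_cancel, exp_zero, mul_one]
    · rw [hnorm]; positivity
    · rw [hnorm]
      exact mul_lt_of_lt_one_right hρ (Real.exp_lt_one_iff.2 hζ)

lemma lt_dist_conj_snd_of_mem_Lam {b : ℂ} {ρ : ℝ} {p : ℂ × ℂ} (hp : p ∈ Lam b ρ) :
    ρ < dist (conj p.2) b := by
  obtain ⟨hprod, hpos, hlt⟩ := hp
  have hρ : 0 < ρ := hpos.trans hlt
  have hmul : ‖p.1 - b‖ * dist (conj p.2) b = ρ ^ 2 := by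
    rw [dist_eq, show conj p.2 - b = conj (p.2 - conj b) by simp, norm_conj, ← norm_mul, hprod,
      norm_pow, norm_real, Real.norm_of_nonneg hρ.le]
  nlinarith

lemma Lam_subset_compl_Sig (b : ℂ) (ρ : ℝ) : Lam b ρ ⊆ Sigᶜ := by
  intro p hp hSig
  have := lt_dist_conj_snd_of_mem_Lam hp
  rw [show p.2 = conj p.1 from hSig, conj_conj, dist_eq] at this
  exact hp.2.2.not_gt this

/-- If `p ∈ Λ_{b,ρ}` and `s = |p.1 - b| / ρ ∈ (0,1)`, then `conj p.2 - b = (p.1 - b) / s²`, so the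
centre and radius are recovered from `p` and `s` as below. -/
noncomputable def leafCenter (s : ℝ) (p : ℂ × ℂ) : ℂ :=
  p.1 - (s ^ 2 / (1 - s ^ 2) : ℝ) * (conj p.2 - p.1)

noncomputable def leafRadius (s : ℝ) (p : ℂ × ℂ) : ℝ :=
  s / (1 - s ^ 2) * ‖conj p.2 - p.1‖

lemma mem_Lam_leafCenter {s : ℝ} (hs : s ∈ Ioo 0 1) {p : ℂ × ℂ} (hp : conj p.2 ≠ p.1) :
    p ∈ Lam (leafCenter s p) (leafRadius s p) := by
  obtain ⟨hs0, hs1⟩ := hs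
  set d := conj p.2 - p.1
  have hd : 0 < ‖d‖ := norm_pos_iff.2 (sub_ne_zero.2 hp)
  have h1s : 0 < 1 - s ^ 2 := by nlinarith
  have hfst : p.1 - leafCenter s p = (s ^ 2 / (1 - s ^ 2) : ℝ) * d := by
    simp only [leafCenter]; ring
  have hsnd : p.2 - conj (leafCenter s p) = (1 / (1 - s ^ 2) : ℝ) * conj d := by
    have h1s' : (1 - (s : ℂ) ^ 2) ≠ 0 := by exact_mod_cast h1s.ne'
    simp only [leafCenter, d, map_sub, map_mul, conj_ofReal, conj_conj]
    push_cast
    field_simp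
    ring
  have hnorm : ‖p.1 - leafCenter s p‖ = s ^ 2 / (1 - s ^ 2) * ‖d‖ := by
    rw [hfst, norm_mul, norm_real, Real.norm_of_nonneg (by positivity)]
  refine ⟨?_, ?_, ?_⟩
  · rw [hfst, hsnd, leafRadius]
    calc (s ^ 2 / (1 - s ^ 2) : ℝ) * d * ((1 / (1 - s ^ 2) : ℝ) * conj d)
        = ((s / (1 - s ^ 2)) ^ 2 : ℝ) * (d * conj d) := by push_cast; ring
      _ = _ := by rw [mul_conj, normSq_eq_norm_sq]; push_cast; ring
  · rw [hnorm]; positivity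
  · rw [hnorm, leafRadius]
    gcongr
    nlinarith

lemma exists_leaf_of_mem_Lam {b : ℂ} {ρ : ℝ} {p : ℂ × ℂ} (hp : p ∈ Lam b ρ) :
    ∃ s ∈ Ioo 0 1, leafCenter s p = b ∧ leafRadius s p = ρ := by
  obtain ⟨hprod, hpos, hlt⟩ := hp
  set v := p.1 - b
  set k := ‖v‖
  have hρ : 0 < ρ := hpos.trans hlt
  have hk : (k : ℂ) ≠ 0 := ofReal_ne_zero.2 hpos.ne'
  have hρk : ρ ^ 2 - k ^ 2 ≠ 0 := by nlinarith
  have hkey : (k ^ 2 : ℝ) * (conj p.2 - p.1) = (ρ ^ 2 - k ^ 2 : ℝ) * v := by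
    have hconj : conj v * (conj p.2 - b) = ρ ^ 2 := by
      simpa using congrArg conj hprod
    have hvv : v * conj v = (k : ℂ) ^ 2 := by rw [mul_conj, normSq_eq_norm_sq]; push_cast; rfl
    push_cast
    linear_combination v * hconj - (conj p.2 - b) * hvv
  refine ⟨k / ρ, ⟨by positivity, (div_lt_one hρ).2 hlt⟩, ?_, ?_⟩
  · have hcoef : ((k / ρ) ^ 2 / (1 - (k / ρ) ^ 2) : ℝ) = k ^ 2 / (ρ ^ 2 - k ^ 2) := by
      field_simp
    rw [leafCenter, hcoef]
    have : ((ρ ^ 2 - k ^ 2 : ℝ) : ℂ) ≠ 0 := ofReal_ne_zero.2 hρk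
    push_cast at hkey this ⊢
    field_simp
    linear_combination -hkey
  · have hnorm : k ^ 2 * ‖conj p.2 - p.1‖ = (ρ ^ 2 - k ^ 2) * k := by
      have := congrArg norm hkey
      rwa [norm_mul, norm_mul, norm_real, norm_real, Real.norm_of_nonneg (by positivity),
        Real.norm_of_nonneg (by nlinarith)] at this
    rw [leafRadius]
    field_simp
    nlinarith

lemma isOpen_OmegaA (a : ℂ) {r₁ : ℝ} (r₂ : ℝ) (h1 : 0 < r₁) : IsOpen (OmegaA a r₁ r₂) := by
  have : OmegaA a r₁ r₂ = ⋃ s ∈ Ioo (0 : ℝ) 1,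
      (fun p ↦ (leafCenter s p, leafRadius s p)) ⁻¹' circlesAround a r₁ r₂ := by
    rw [OmegaA_eq_biUnion a r₂ h1]
    ext p
    simp only [mem_iUnion, mem_preimage, exists_prop, Prod.exists]
    constructor
    · rintro ⟨b, ρ, hc, hp⟩
      obtain ⟨s, hs, rfl, rfl⟩ := exists_leaf_of_mem_Lam hp
      exact ⟨s, hs, hc⟩
    · rintro ⟨s, hs, hc⟩
      have hpos := pos_of_mem_circlesAround h1.le hc
      have hd : conj p.2 ≠ p.1 := fun h ↦ by simp [leafRadius, h] at hpos
      exact ⟨_, _, hc, mem_Lam_leafCenter hs hd⟩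
  rw [this]
  refine isOpen_biUnion fun s _ ↦ (isOpen_circlesAround a r₁ r₂).preimage ?_
  unfold leafCenter leafRadius
  fun_prop

lemma OmegaA_eq_image (a : ℂ) {r₁ : ℝ} (r₂ : ℝ) (h1 : 0 < r₁) :
    OmegaA a r₁ r₂ = (fun x : (ℂ × ℝ) × ℂ ↦ lamParam x.1.1 x.1.2 x.2) ''
      (circlesAround a r₁ r₂ ×ˢ {ζ | ζ.re < 0}) := by
  rw [OmegaA_eq_biUnion a r₂ h1, image_prod (f := fun (c : ℂ × ℝ) ζ ↦ lamParam c.1 c.2 ζ),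
    ← iUnion_image_left]
  exact iUnion₂_congr fun c hc ↦ Lam_eq_image (pos_of_mem_circlesAround h1.le hc)

lemma isConnected_OmegaA {a : ℂ} {r₁ r₂ : ℝ} (h1 : 0 < r₁) (h12 : r₁ < r₂) :
    IsConnected (OmegaA a r₁ r₂) := by
  rw [OmegaA_eq_image a r₂ h1]
  have hne : (circlesAround a r₁ r₂ ×ˢ {ζ : ℂ | ζ.re < 0}).Nonempty :=
    ⟨((a, (r₁ + r₂) / 2), -1), ⟨by simp [circlesAround]; constructor <;> linarith, by simp⟩⟩
  exact IsConnected.image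
    ⟨hne, ((convex_circlesAround a r₁ r₂).prod (convex_halfSpace_re_lt 0)).isPreconnected⟩
    _ continuous_lamParam.continuousOn

lemma not_isBounded_Lam (b : ℂ) {ρ : ℝ} (hρ : 0 < ρ) : ¬IsBounded (Lam b ρ) := by
  rw [Lam_eq_image hρ]
  intro hbd
  obtain ⟨C, hC⟩ := isBounded_iff_forall_norm_le.1 hbd
  have hlow : ∀ s : ℝ, ρ * Real.exp s - ‖b‖ ≤ ‖lamParam b ρ (-s)‖ := fun s ↦
    calc ρ * Real.exp s - ‖b‖ = ‖(ρ : ℂ) * exp (-(-s : ℂ))‖ - ‖conj b‖ := by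
          rw [neg_neg, norm_mul, norm_real, Real.norm_of_nonneg hρ.le, norm_conj, ← ofReal_exp,
            norm_real, Real.norm_of_nonneg (Real.exp_nonneg s)]
      _ ≤ ‖conj b + ρ * exp (-(-s : ℂ))‖ := by
          rw [add_comm]; exact norm_sub_le_norm_add _ _
      _ ≤ ‖lamParam b ρ (-s)‖ := norm_snd_le (lamParam b ρ (-s))
  have htend : Tendsto (fun s ↦ ρ * Real.exp s - ‖b‖) atTop atTop :=
    tendsto_atTop_add_const_right _ _ (Real.tendsto_exp_atTop.const_mul_atTop hρ)
  obtain ⟨s, hCs, hs⟩ := ((htend.eventually_gt_atTop C).and (eventually_gt_atTop 0)).exists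
  have := hC _ (mem_image_of_mem _ (show (-s : ℂ).re < 0 by simpa using hs))
  linarith [hlow s]

lemma not_isBounded_OmegaA {a : ℂ} {r₁ r₂ : ℝ} (h1 : 0 < r₁) (h12 : r₁ < r₂) :
    ¬IsBounded (OmegaA a r₁ r₂) := by
  have hc : (a, (r₁ + r₂) / 2) ∈ circlesAround a r₁ r₂ := by
    simp only [circlesAround, mem_ofPred_eq, dist_self]; constructor <;> linarith
  rw [OmegaA_eq_biUnion a r₂ h1]
  exact fun hbd ↦ not_isBounded_Lam a (pos_of_mem_circlesAround h1.le hc)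
    (hbd.subset (subset_biUnion_of_mem (u := fun c : ℂ × ℝ ↦ Lam c.1 c.2) hc))

lemma OmegaA_subset_compl_Sig (a : ℂ) (r₁ r₂ : ℝ) : OmegaA a r₁ r₂ ⊆ Sigᶜ := by
  rintro p ⟨b, ρ, -, -, -, hp⟩
  exact Lam_subset_compl_Sig b ρ hp

lemma closure_OmegaA_subset (a : ℂ) {r₁ : ℝ} (r₂ : ℝ) (h1 : 0 < r₁) :
    closure (OmegaA a r₁ r₂) ⊆ {p | dist p.1 a ≤ r₂ ∧ r₁ ≤ dist (conj p.2) a} := by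
  refine closure_minimal ?_ ((isClosed_le (continuous_fst.dist continuous_const)
    continuous_const).inter (isClosed_le continuous_const
    ((continuous_conj.comp continuous_snd).dist continuous_const)))
  rw [OmegaA_eq_biUnion a r₂ h1]
  simp only [iUnion_subset_iff]
  rintro ⟨b, ρ⟩ ⟨hin, hout⟩ p hp
  have h₁ : dist p.1 b < ρ := by rw [dist_eq]; exact hp.2.2
  have h₂ := lt_dist_conj_snd_of_mem_Lam hp
  constructor <;> linarith [dist_triangle p.1 b a, dist_triangle (conj p.2) a b, dist_comm a b]

lemma mem_closure_OmegaA {a : ℂ} {r₁ r₂ : ℝ} (h1 : 0 < r₁) (h12 : r₁ < r₂) {z : ℂ}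
    (hz : z ∈ Ann a r₁ r₂) : (z, conj z) ∈ closure (OmegaA a r₁ r₂) := by
  have hpolar := norm_mul_exp_arg_mul_I (z - a)
  have hpt : lamParam a ‖z - a‖ (arg (z - a) * I) = (z, conj z) := by
    ext1
    · simp only [lamParam, hpolar]; ring
    · have : exp (-(arg (z - a) * I)) = conj (exp (arg (z - a) * I)) := by
        rw [← exp_conj, map_mul, conj_ofReal, conj_I, mul_neg]
      simp only [lamParam, this]
      rw [← conj_ofReal, ← map_mul, hpolar, map_sub]; ring
  have hr : (a, ‖z - a‖) ∈ closure (circlesAround a r₁ r₂) := by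
    have : ‖z - a‖ ∈ closure (Ioo r₁ r₂) := by rw [closure_Ioo h12.ne]; exact hz
    refine map_mem_closure (Continuous.prodMk_right a) this fun ρ hρ ↦ ?_
    simp only [circlesAround, mem_ofPred_eq, dist_self, add_zero]
    exact hρ
  rw [OmegaA_eq_image a r₂ h1, ← hpt]
  refine map_mem_closure (x := ((a, ‖z - a‖), arg (z - a) * I)) continuous_lamParam ?_
    (mapsTo_image _ _)
  rw [closure_prod_eq, closure_setOfPred_re_lt]
  exact ⟨hr, by simp⟩

lemma closure_OmegaA_inter_Sig {a : ℂ} {r₁ r₂ : ℝ} (h1 : 0 < r₁) (h12 : r₁ < r₂) :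
    closure (OmegaA a r₁ r₂) ∩ Sig = {p : ℂ × ℂ | p.2 = conj p.1 ∧ p.1 ∈ Ann a r₁ r₂} := by
  ext ⟨z, w⟩
  simp only [Sig, mem_inter_iff, mem_ofPred_eq]
  constructor
  · rintro ⟨hcl, rfl⟩
    obtain ⟨h₂, h₁⟩ := closure_OmegaA_subset a r₂ h1 hcl
    simp only [conj_conj, dist_eq] at h₁ h₂
    exact ⟨rfl, h₁, h₂⟩
  · rintro ⟨rfl, hz⟩
    exact ⟨mem_closure_OmegaA h1 h12 hz, rfl⟩

theorem stmt6 (a : ℂ) (r₁ r₂ : ℝ) (h1 : 0 < r₁) (h12 : r₁ < r₂) :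
    IsOpen (OmegaA a r₁ r₂) ∧
    IsConnected (OmegaA a r₁ r₂) ∧
    ¬ Bornology.IsBounded (OmegaA a r₁ r₂) ∧
    OmegaA a r₁ r₂ ⊆ Sigᶜ ∧
    closure (OmegaA a r₁ r₂) ∩ Sig =
      {p : ℂ × ℂ | p.2 = conj p.1 ∧ p.1 ∈ Ann a r₁ r₂} :=
  ⟨isOpen_OmegaA a r₂ h1, isConnected_OmegaA h1 h12, not_isBounded_OmegaA h1 h12,
    OmegaA_subset_compl_Sig a r₁ r₂, closure_OmegaA_inter_Sig h1 h12⟩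
end

section
/- Let n ≥ 1 and let a₁,…,aₙ ∈ ℂ, ρ₁,…,ρₙ > 0 with |a_j| > ρ_j for each j. Define f : ℂ → ℂ by f(0) = 0 and f(z) = (z²/conj(z))ⁿ · ∏_{j=1}^{n} ((z−a_j)(conj(z)−conj(a_j)) − ρ_j²) for z ≠ 0. Then f is continuous on ℂ; f extends holomorphically from every circle bΔ(a,ρ) with |a| < ρ (every circle surrounding the origin); f extends holomorphically from every circle bΔ(a,ρ) with |a| = ρ (every circle passing through the origin); f extends holomorphically from each circle bΔ(a_j,ρ_j), 1 ≤ j ≤ n; yet f is not holomorphic on ℂ. -/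
/-!
Write `f(z) = (z ^ 2 / conj z) ^ n Q(z)` with `Q(z) = ∏ (|z - a_j| ^ 2 - ρ_j ^ 2)`.
On a circle `|z - c| = r` we have `conj z = (conj c * (z - c) + r ^ 2) / (z - c)`, so there `f`
is a rational function of `z`: the factor `(z - c) ^ n` produced by `(z ^ 2 / conj z) ^ n`
cancels against the one produced by the `n` factors of `Q`, leaving
`z ^ (2 n) P(z) / (conj c * (z - c) + r ^ 2) ^ n` with `P` a polynomial. For `|c| < r` the
denominator has no zero on the closed disc; for `|c| = r` it equals `(conj c * z) ^ n` and cancels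
against `z ^ (2 n)`. On `bΔ(a_j, ρ_j)` the `j`-th factor vanishes, so `0` is an extension.

If `f` were holomorphic near `0`, then `f(z) / z ^ n = (z / conj z) ^ n Q(z)` would be holomorphic
and bounded on a punctured disc, hence would have a limit at `0` by Riemann's removable singularity
theorem. Along the ray `t w`, `t → 0⁺`, it tends to `(w / conj w) ^ n Q(0)`, which depends on `w`
because `Q(0) ≠ 0`.
-/

open Complex Metric ComplexConjugate

/-- A function `f` extends holomorphically from the circle `bΔ(a,ρ)`. -/
def ExtHol (f : ℂ → ℂ) (a : ℂ) (ρ : ℝ) : Prop :=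
  ∃ g : ℂ → ℂ, ContinuousOn g (closedBall a ρ) ∧
    DifferentiableOn ℂ g (ball a ρ) ∧ ∀ z ∈ sphere a ρ, g z = f z

open Filter Topology

theorem continuous_sq_div_conj : Continuous fun z : ℂ => z ^ 2 / conj z := by
  have hnorm : ∀ z : ℂ, ‖z ^ 2 / conj z‖ = ‖z‖ := by
    intro z
    rcases eq_or_ne z 0 with rfl | hz
    · simp
    · rw [norm_div, norm_pow, Complex.norm_conj, sq, mul_div_assoc,
        div_self (norm_ne_zero_iff.mpr hz), mul_one]
  refine continuous_iff_continuousAt.mpr fun z => ?_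
  rcases eq_or_ne z 0 with rfl | hz
  · rw [ContinuousAt, map_zero, div_zero, tendsto_zero_iff_norm_tendsto_zero]
    simpa only [hnorm, norm_zero] using continuous_norm.tendsto (0 : ℂ)
  · exact (continuousAt_id.pow 2).div Complex.continuous_conj.continuousAt
      ((map_ne_zero conj).mpr hz)

theorem exists_div_conj_pow_ne_one {n : ℕ} (hn : n ≠ 0) :
    ∃ w : ℂ, w ≠ 0 ∧ (w / conj w) ^ n ≠ 1 := by
  obtain ⟨w, hw⟩ := IsAlgClosed.exists_pow_nat_eq (-1 : ℂ) (by omega : 0 < 2 * n)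
  have hw0 : w ≠ 0 := by rintro rfl; simp [hn] at hw
  refine ⟨w, hw0, fun h => ?_⟩
  rw [div_pow, div_eq_one_iff_eq (pow_ne_zero _ ((map_ne_zero conj).mpr hw0))] at h
  have : ((Complex.normSq w ^ n : ℝ) : ℂ) = -1 := by
    rw [← hw, pow_mul', sq, Complex.ofReal_pow, ← Complex.mul_conj, mul_pow, ← h]
  have h' := congrArg Complex.re this
  simp only [Complex.ofReal_re, Complex.neg_re, Complex.one_re] at h'
  linarith [pow_nonneg (Complex.normSq_nonneg w) n]

theorem tendsto_ofReal_mul_nhdsNE_zero {w : ℂ} (hw : w ≠ 0) :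
    Tendsto (fun t : ℝ => (t : ℂ) * w) (𝓝[>] 0) (𝓝[≠] 0) := by
  refine tendsto_nhdsWithin_iff.mpr ⟨?_, ?_⟩
  · have := ((Complex.continuous_ofReal.mul continuous_const).tendsto' (0 : ℝ) 0 (by simp) :
      Tendsto (fun t : ℝ => (t : ℂ) * w) (𝓝 0) (𝓝 0))
    exact this.mono_left nhdsWithin_le_nhds
  · filter_upwards [self_mem_nhdsWithin] with t (ht : 0 < t)
    exact mul_ne_zero (Complex.ofReal_ne_zero.mpr ht.ne') hw

theorem not_eventually_differentiableAt_sq_div_conj_pow_mul {n : ℕ} (hn : n ≠ 0) {Q : ℂ → ℂ}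
    (hQ : ContinuousAt Q 0) (hQ0 : Q 0 ≠ 0) :
    ¬ ∀ᶠ z in 𝓝[≠] 0, DifferentiableAt ℂ (fun z => (z ^ 2 / conj z) ^ n * Q z) z := by
  intro hd
  set u : ℂ → ℂ := fun z => (z ^ 2 / conj z) ^ n * Q z / z ^ n
  have hu : ∀ z ≠ 0, u z = (z / conj z) ^ n * Q z := by
    intro z hz
    have : conj z ≠ 0 := (map_ne_zero conj).mpr hz
    simp only [u]
    field_simp
    ring
  have hu_diff : ∀ᶠ z in 𝓝[≠] 0, DifferentiableAt ℂ u z := by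
    filter_upwards [hd, self_mem_nhdsWithin] with z hdz (hz : z ≠ 0)
    exact hdz.div (differentiableAt_pow n) (pow_ne_zero n hz)
  have hu_bdd : IsBoundedUnder (· ≤ ·) (𝓝[≠] 0) fun z => ‖u z - u 0‖ := by
    refine IsBoundedUnder.mono_le (u := fun z => ‖Q z‖ + ‖u 0‖)
      ((hQ.norm.add tendsto_const_nhds).mono_left nhdsWithin_le_nhds).isBoundedUnder_le ?_
    filter_upwards [self_mem_nhdsWithin] with z (hz : z ≠ 0)
    have hunit : ‖z / conj z‖ = 1 := by
      rw [norm_div, Complex.norm_conj, div_self (norm_ne_zero_iff.mpr hz)]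
    calc ‖u z - u 0‖ ≤ ‖u z‖ + ‖u 0‖ := norm_sub_le _ _
      _ = ‖Q z‖ + ‖u 0‖ := by rw [hu z hz, norm_mul, norm_pow, hunit, one_pow, one_mul]
  have hlim := tendsto_limUnder_of_differentiable_on_punctured_nhds_of_bounded_under hu_diff hu_bdd
  have hray : ∀ w ≠ 0, limUnder (𝓝[≠] 0) u = (w / conj w) ^ n * Q 0 := by
    intro w hw
    have hQ_ray : Tendsto (fun t : ℝ => Q (t * w)) (𝓝[>] 0) (𝓝 (Q 0)) :=
      hQ.tendsto.comp ((tendsto_ofReal_mul_nhdsNE_zero hw).mono_right nhdsWithin_le_nhds)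
    refine tendsto_nhds_unique (hlim.comp (tendsto_ofReal_mul_nhdsNE_zero hw))
      ((hQ_ray.const_mul _).congr' ?_)
    filter_upwards [self_mem_nhdsWithin] with t (ht : 0 < t)
    have htC : (t : ℂ) ≠ 0 := Complex.ofReal_ne_zero.mpr ht.ne'
    rw [Function.comp_apply, hu _ (mul_ne_zero htC hw), map_mul, Complex.conj_ofReal,
      mul_div_mul_left _ _ htC]
  obtain ⟨w, hw0, hw⟩ := exists_div_conj_pow_ne_one hn
  have h := (hray 1 one_ne_zero).symm.trans (hray w hw0)
  rw [map_one, div_one, one_pow, one_mul] at h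
  exact hw (mul_right_cancel₀ hQ0 (by rw [← h, one_mul])).symm

def circlePower (a : ℂ) (ρ : ℝ) (z : ℂ) : ℂ := (z - a) * (conj z - conj a) - (ρ : ℂ) ^ 2

theorem circlePower_eq (a : ℂ) (ρ : ℝ) (z : ℂ) :
    circlePower a ρ z = ((‖z - a‖ ^ 2 - ρ ^ 2 : ℝ) : ℂ) := by
  rw [circlePower, ← map_sub, Complex.mul_conj, Complex.normSq_eq_norm_sq]
  push_cast
  rfl

theorem continuous_circlePower (a : ℂ) (ρ : ℝ) : Continuous (circlePower a ρ) := by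
  unfold circlePower
  fun_prop

theorem circlePower_eq_zero_of_mem_sphere {a z : ℂ} {ρ : ℝ} (hz : z ∈ sphere a ρ) :
    circlePower a ρ z = 0 := by
  rw [circlePower_eq, mem_sphere_iff_norm.mp hz, sub_self, Complex.ofReal_zero]

theorem circlePower_zero_ne_zero {a : ℂ} {ρ : ℝ} (hρ : 0 < ρ) (ha : ρ < ‖a‖) :
    circlePower a ρ 0 ≠ 0 := by
  rw [circlePower_eq, zero_sub, norm_neg, Complex.ofReal_ne_zero]
  nlinarith

def circleReflectNum (c : ℂ) (r : ℝ) (z : ℂ) : ℂ := conj c * (z - c) + (r : ℂ) ^ 2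

theorem sub_mul_conj_of_mem_sphere {c z : ℂ} {r : ℝ} (hz : z ∈ sphere c r) :
    (z - c) * conj z = circleReflectNum c r z := by
  have := circlePower_eq_zero_of_mem_sphere hz
  rw [circlePower] at this
  rw [circleReflectNum]
  linear_combination this

theorem circleReflectNum_ne_zero {c z : ℂ} {r : ℝ} (hc : ‖c‖ < r) (hz : z ∈ closedBall c r) :
    circleReflectNum c r z ≠ 0 := by
  intro h
  have h' : conj c * (z - c) = -(r : ℂ) ^ 2 := by
    rw [circleReflectNum] at h
    linear_combination h
  have hnorm := congrArg norm h'
  rw [norm_mul, Complex.norm_conj, norm_neg, norm_pow, Complex.norm_real, Real.norm_eq_abs,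
    sq_abs] at hnorm
  have hr : 0 < r := (norm_nonneg c).trans_lt hc
  nlinarith [mem_closedBall_iff_norm.mp hz, norm_nonneg (z - c), norm_nonneg c]

theorem circleReflectNum_of_norm_eq {c : ℂ} {r : ℝ} (hc : ‖c‖ = r) (z : ℂ) :
    circleReflectNum c r z = conj c * z := by
  have : conj c * c = (r : ℂ) ^ 2 := by
    rw [mul_comm, Complex.mul_conj, Complex.normSq_eq_norm_sq, hc]
    push_cast
    rfl
  rw [circleReflectNum]
  linear_combination -this

def reflectedCirclePower (c : ℂ) (r : ℝ) (a : ℂ) (ρ : ℝ) (z : ℂ) : ℂ :=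
  (z - a) * (circleReflectNum c r z - conj a * (z - c)) - (ρ : ℂ) ^ 2 * (z - c)

theorem differentiable_reflectedCirclePower (c : ℂ) (r : ℝ) (a : ℂ) (ρ : ℝ) :
    Differentiable ℂ (reflectedCirclePower c r a ρ) := by
  unfold reflectedCirclePower circleReflectNum
  fun_prop

theorem sub_mul_circlePower_of_mem_sphere {c z : ℂ} {r : ℝ} (hz : z ∈ sphere c r) (a : ℂ)
    (ρ : ℝ) : (z - c) * circlePower a ρ z = reflectedCirclePower c r a ρ z := by
  rw [circlePower, reflectedCirclePower, ← sub_mul_conj_of_mem_sphere hz]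
  ring

section Twisted

variable {n : ℕ} (a : Fin n → ℂ) (ρ : Fin n → ℝ)

noncomputable def twistedCirclePowerProd (z : ℂ) : ℂ :=
  (z ^ 2 / conj z) ^ n * ∏ j, circlePower (a j) (ρ j) z

theorem twistedCirclePowerProd_of_mem_sphere {c z : ℂ} {r : ℝ} (hr : 0 < r)
    (hz : z ∈ sphere c r) : twistedCirclePowerProd a ρ z =
      z ^ (2 * n) * (∏ j, reflectedCirclePower c r (a j) (ρ j) z) / circleReflectNum c r z ^ n := by
  rcases eq_or_ne n 0 with rfl | hn
  · simp [twistedCirclePowerProd]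
  rcases eq_or_ne z 0 with rfl | hz0
  · simp [twistedCirclePowerProd, hn]
  have hzc : z - c ≠ 0 := by
    rw [← norm_ne_zero_iff, mem_sphere_iff_norm.mp hz]
    exact hr.ne'
  have hconj : conj z ≠ 0 := (map_ne_zero conj).mpr hz0
  simp only [twistedCirclePowerProd, ← sub_mul_circlePower_of_mem_sphere hz,
    ← sub_mul_conj_of_mem_sphere hz, Finset.prod_mul_distrib, Finset.prod_const,
    Finset.card_univ, Fintype.card_fin]
  rw [mul_pow, div_pow, ← pow_mul, mul_comm 2 n]
  field_simp

theorem extHol_of_differentiableOn {f g : ℂ → ℂ} {c : ℂ} {r : ℝ}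
    (hg : DifferentiableOn ℂ g (closedBall c r)) (hfg : Set.EqOn g f (sphere c r)) :
    ExtHol f c r :=
  ⟨g, hg.continuousOn, hg.mono ball_subset_closedBall, hfg⟩

theorem extHol_twistedCirclePowerProd_of_norm_lt {c : ℂ} {r : ℝ} (hr : 0 < r) (hc : ‖c‖ < r) :
    ExtHol (twistedCirclePowerProd a ρ) c r := by
  refine extHol_of_differentiableOn (fun z hz => ?_)
    (fun z hz => (twistedCirclePowerProd_of_mem_sphere a ρ hr hz).symm)
  refine DifferentiableAt.differentiableWithinAt ?_
  refine ((differentiableAt_pow _).mul ?_).div ?_ (pow_ne_zero _ (circleReflectNum_ne_zero hc hz))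
  · exact (Differentiable.fun_finsetProd fun j _ => differentiable_reflectedCirclePower _ _ _ _) z
  · unfold circleReflectNum
    fun_prop

theorem extHol_twistedCirclePowerProd_of_norm_eq {c : ℂ} {r : ℝ} (hr : 0 < r) (hc : ‖c‖ = r) :
    ExtHol (twistedCirclePowerProd a ρ) c r := by
  refine extHol_of_differentiableOn (g := fun z =>
      z ^ n * (∏ j, reflectedCirclePower c r (a j) (ρ j) z) / conj c ^ n)
    (Differentiable.differentiableOn ?_) (fun z hz => ?_)
  · exact ((differentiable_pow n).mul (Differentiable.fun_finsetProd fun j _ =>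
      differentiable_reflectedCirclePower _ _ _ _)).div_const _
  rw [twistedCirclePowerProd_of_mem_sphere a ρ hr hz, circleReflectNum_of_norm_eq hc]
  rcases eq_or_ne n 0 with rfl | hn
  · simp
  rcases eq_or_ne z 0 with rfl | hz0
  · simp [hn]
  have hc0 : conj c ≠ 0 := by
    rw [← norm_ne_zero_iff, Complex.norm_conj, hc]
    exact hr.ne'
  field_simp
  ring

theorem extHol_twistedCirclePowerProd_of_circle (j : Fin n) :
    ExtHol (twistedCirclePowerProd a ρ) (a j) (ρ j) :=
  extHol_of_differentiableOn (g := fun _ => 0) (differentiableOn_const 0) fun z hz => by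
    rw [twistedCirclePowerProd, Finset.prod_eq_zero (Finset.mem_univ j)
      (circlePower_eq_zero_of_mem_sphere hz), mul_zero]

end Twisted

theorem stmt14 (n : ℕ) (hn : 1 ≤ n) (a : Fin n → ℂ) (ρ : Fin n → ℝ)
    (hρ : ∀ j, 0 < ρ j) (ha : ∀ j, ρ j < ‖a j‖) :
    let f : ℂ → ℂ := fun z => if z = 0 then 0 else
      (z ^ 2 / conj z) ^ n *
        ∏ j, ((z - a j) * (conj z - conj (a j)) - ((ρ j : ℝ) : ℂ) ^ 2)
    Continuous f ∧
    (∀ (c : ℂ) (r : ℝ), 0 < r → ‖c‖ < r → ExtHol f c r) ∧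
    (∀ (c : ℂ) (r : ℝ), 0 < r → ‖c‖ = r → ExtHol f c r) ∧
    (∀ j, ExtHol f (a j) (ρ j)) ∧
    (∃ z, ¬ DifferentiableAt ℂ f z) := by
  intro f
  have hn0 : n ≠ 0 := Nat.one_le_iff_ne_zero.mp hn
  -- At `z = 0` the formula also gives `0`, as `conj 0 = 0` and `x / 0 = 0` in Lean.
  have hf : f = twistedCirclePowerProd a ρ := by
    funext z
    rcases eq_or_ne z 0 with rfl | hz
    · simp [f, twistedCirclePowerProd, hn0]
    · simp only [f, if_neg hz]
      rfl
  have hQ : Continuous fun z => ∏ j, circlePower (a j) (ρ j) z :=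
    continuous_finsetProd _ fun j _ => continuous_circlePower (a j) (ρ j)
  have hQ0 : ∏ j, circlePower (a j) (ρ j) 0 ≠ 0 :=
    Finset.prod_ne_zero_iff.mpr fun j _ => circlePower_zero_ne_zero (hρ j) (ha j)
  rw [hf]
  refine ⟨(continuous_sq_div_conj.pow n).mul hQ,
    fun c r hr hc => extHol_twistedCirclePowerProd_of_norm_lt a ρ hr hc,
    fun c r hr hc => extHol_twistedCirclePowerProd_of_norm_eq a ρ hr hc,
    extHol_twistedCirclePowerProd_of_circle a ρ, ?_⟩
  exact (not_eventually.mp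
    (not_eventually_differentiableAt_sq_div_conj_pow_mul hn0 hQ.continuousAt hQ0)).exists
end
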